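/- Fix 0 < K⁻ ≤ K⁺ and δ ∈ [−1,1], and set K := √(K⁺/K⁻). For u ∈ ℝ define V⁺(u) := u/√(u²+4), V⁻(u) := Ku/√(K²u²+4), r(u) := √(K²u²+4)/(K√(u²+4)), p⁺(u) := (1/2)(1 + r(u))(1 + δ·V⁻(u))/(1 + δ·V⁺(u)) and p⁻(u) := (1/2)(1 − r(u))(1 − δ·V⁻(u))/(1 + δ·V⁺(u)). Then for every u ∈ ℝ, p⁺(u) · V⁻(u)/(1 + δ·V⁻(u)) + p⁻(u) · (−V⁻(u))/(1 − δ·V⁻(u)) = V⁺(u)/(1 + δ·V⁺(u)). Consequently, for every δ′ ∈ [−1,1], p⁺(u) · (1 + δ′·V⁻(u))/(1 + δ·V⁻(u)) + p⁻(u) · (1 − δ′·V⁻(u))/(1 − δ·V⁻(u)) = (1 + δ′·V⁺(u))/(1 + δ·V⁺(u)). -/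

import Mathlib

/-- algebraic identities for the coupling weights p⁺, p⁻. -/
theorem stmt14 (Km Kp δ : ℝ) (hKm : 0 < Km) (hle : Km ≤ Kp)
    (hδ : δ ∈ Set.Icc (-1 : ℝ) 1) :
    (let K : ℝ := Real.sqrt (Kp / Km)
     let Vp : ℝ → ℝ := fun u => u / Real.sqrt (u ^ 2 + 4)
     let Vm : ℝ → ℝ := fun u => K * u / Real.sqrt (K ^ 2 * u ^ 2 + 4)
     let r : ℝ → ℝ := fun u => Real.sqrt (K ^ 2 * u ^ 2 + 4) / (K * Real.sqrt (u ^ 2 + 4))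
     let pp : ℝ → ℝ := fun u => (1 / 2) * (1 + r u) * (1 + δ * Vm u) / (1 + δ * Vp u)
     let pm : ℝ → ℝ := fun u => (1 / 2) * (1 - r u) * (1 - δ * Vm u) / (1 + δ * Vp u)
     (∀ u : ℝ,
        pp u * (Vm u / (1 + δ * Vm u)) + pm u * (-(Vm u) / (1 - δ * Vm u)) =
          Vp u / (1 + δ * Vp u)) ∧
     (∀ u : ℝ, ∀ δ' ∈ Set.Icc (-1 : ℝ) 1,
        pp u * ((1 + δ' * Vm u) / (1 + δ * Vm u)) +
          pm u * ((1 - δ' * Vm u) / (1 - δ * Vm u)) =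
         (1 + δ' * Vp u) / (1 + δ * Vp u))) := by
  intro K Vp Vm r pp pm
  obtain ⟨hδ1, hδ2⟩ := hδ
  have hδa : |δ| ≤ 1 := abs_le.mpr ⟨hδ1, hδ2⟩
  have hK : 0 < K := Real.sqrt_pos.mpr (div_pos (lt_of_lt_of_le hKm hle) hKm)
  have key : ∀ u : ℝ, r u * Vm u = Vp u ∧ (1 + δ * Vm u ≠ 0) ∧ (1 - δ * Vm u ≠ 0)
      ∧ (1 + δ * Vp u ≠ 0) := by
    intro u
    have hB : 0 < Real.sqrt (u ^ 2 + 4) := Real.sqrt_pos.mpr (by positivity)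
    have hA : 0 < Real.sqrt (K ^ 2 * u ^ 2 + 4) := Real.sqrt_pos.mpr (by positivity)
    have hVm : |Vm u| < 1 := by
      have h1 : |K * u| < Real.sqrt (K ^ 2 * u ^ 2 + 4) := by
        rw [show K ^ 2 * u ^ 2 + 4 = (K * u) ^ 2 + 4 by ring]
        exact (Real.lt_sqrt (abs_nonneg _)).mpr (by nlinarith [sq_abs (K * u)])
      have : |Vm u| = |K * u| / Real.sqrt (K ^ 2 * u ^ 2 + 4) := by
        simp only [Vm, abs_div, abs_of_pos hA]
      rw [this]
      exact (div_lt_one hA).mpr h1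
    have hVp : |Vp u| < 1 := by
      have h1 : |u| < Real.sqrt (u ^ 2 + 4) := by
        exact (Real.lt_sqrt (abs_nonneg _)).mpr (by nlinarith [sq_abs u])
      have : |Vp u| = |u| / Real.sqrt (u ^ 2 + 4) := by
        simp only [Vp, abs_div, abs_of_pos hB]
      rw [this]
      exact (div_lt_one hB).mpr h1
    have hm : |δ * Vm u| < 1 := by
      rw [abs_mul]
      calc |δ| * |Vm u| ≤ 1 * |Vm u| := by
            exact mul_le_mul_of_nonneg_right hδa (abs_nonneg _)
        _ < 1 := by rw [one_mul]; exact hVm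
    have hp : |δ * Vp u| < 1 := by
      rw [abs_mul]
      calc |δ| * |Vp u| ≤ 1 * |Vp u| := by
            exact mul_le_mul_of_nonneg_right hδa (abs_nonneg _)
        _ < 1 := by rw [one_mul]; exact hVp
    obtain ⟨hm1, hm2⟩ := abs_lt.mp hm
    obtain ⟨hp1, hp2⟩ := abs_lt.mp hp
    refine ⟨?_, by intro h; linarith, by intro h; linarith, by intro h; linarith⟩
    simp only [r, Vm, Vp]
    field_simp
  constructor
  · intro u
    obtain ⟨h1, h2, h3, h4⟩ := key u
    simp only [pp, pm]
    rw [← h1] at h4 ⊢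
    field_simp
    ring
  · intro u δ' _
    obtain ⟨h1, h2, h3, h4⟩ := key u
    simp only [pp, pm]
    rw [← h1] at h4 ⊢
    field_simp
    ring
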